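/- Let k, L > 1, κ : {1,…,k-1} × ℕ → ℤ/L, and let b(n) = exp(2πi/L · Σ_q κ(s_q, w_q)) where n = Σ_q s_q k^{w_q} in base k. Suppose there exist N ≥ 0 and l > 0 such that b(N + t·l) = b(N) for all t ≥ 0. Then there exists A ∈ ℕ and an L-th root of unity h such that b(s·k^{A+y}) = h^{s·k^y} for all s ∈ {1,…,k-1} and all y ∈ ℕ; equivalently κ(s, A+y) ≡ κ(1,A)·s·k^y (mod L). -/

import Mathlib

/-!
Write `F(n, C) = Σ_q κ(s_q, w_q + C)` over the nonzero base-`k` digits of `n`, so that `b(n)` is the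
standard additive character of `ZMod L` evaluated at `F(n, 0)`. For `r < k^D` the digits of
`r + k^D a` are those of `r`, then zeros, then those of `a` shifted by `D`, so `F` splits additively.
Constancy of `b` on `N + lℕ` forces `F(n, N) = 0` for every positive multiple `n` of `l` (place `n`
above the digits of `N`). Hence, once `l < k^D`, `F(a, D + N) = -F(r, N)` for any `r < k^D` with
`l ∣ r + k^D a`, so `F(a, D + N)` depends only on `k^D a mod l`. As `k^E mod l` is eventually
periodic with some period `T`, comparing the digit `s` with `Σ_{i<s} k^{Ti}` (`s` ones spaced `T`
apart) gives `κ(s, D + N) = s κ(1, D + N)`, and comparing `k^{D+1}` with `k^D Σ_{i<k} k^{Ti}` gives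
`κ(1, D + 1 + N) = k κ(1, D + N)`.
-/

open scoped BigOperators

/-- b(n) = exp(2πi/L · Σ_q κ(s_q,w_q)) over the nonzero base-k digits of n. -/
noncomputable def tmUnit (k L : ℕ) (κ : ℕ → ℕ → ZMod L) (n : ℕ) : ℂ :=
  Complex.exp (2 * Real.pi * Complex.I *
    ((∑ y ∈ Finset.range (Nat.digits k n).length,
      if (Nat.digits k n).getD y 0 ≠ 0 then (κ ((Nat.digits k n).getD y 0) y).val else 0 : ℕ)) / L)

open Finset

def digitSum {L : ℕ} (κ : ℕ → ℕ → ZMod L) (ds : List ℕ) (C : ℕ) : ZMod L :=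
  ∑ y ∈ range ds.length, if ds.getD y 0 ≠ 0 then κ (ds.getD y 0) (y + C) else 0

section DigitSum

variable {L : ℕ} (κ : ℕ → ℕ → ZMod L)

lemma digitSum_append (ds es : List ℕ) (C : ℕ) :
    digitSum κ (ds ++ es) C = digitSum κ ds C + digitSum κ es (ds.length + C) := by
  unfold digitSum
  rw [List.length_append, sum_range_add]
  congr 1
  · refine sum_congr rfl fun y hy => ?_
    rw [List.getD_append _ _ _ _ (mem_range.mp hy)]
  · refine sum_congr rfl fun y _ => ?_
    rw [List.getD_append_right _ _ _ _ (Nat.le_add_right _ _), Nat.add_sub_cancel_left,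
      show ds.length + y + C = y + (ds.length + C) by omega]

lemma digitSum_replicate_zero (j C : ℕ) : digitSum κ (List.replicate j 0) C = 0 :=
  sum_eq_zero fun y _ => by simp [List.getD_eq_getElem?_getD]

variable {k : ℕ}

lemma digitSum_digits_add_pow_mul (hk : 1 < k) {r a D : ℕ} (ha : 0 < a) (hr : r < k ^ D)
    (C : ℕ) :
    digitSum κ (Nat.digits k (r + k ^ D * a)) C =
      digitSum κ (Nat.digits k r) C + digitSum κ (Nat.digits k a) (D + C) := by
  obtain ⟨j, hj⟩ := Nat.exists_eq_add_of_le ((Nat.digits_length_le_iff hk r).mpr hr)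
  rw [hj, ← Nat.digits_append_zeroes_append_digits hk ha, digitSum_append, digitSum_append,
    digitSum_replicate_zero, List.length_append, List.length_replicate, add_zero]

lemma digitSum_digits_of_lt {s : ℕ} (hs : 0 < s) (hsk : s < k) (C : ℕ) :
    digitSum κ (Nat.digits k s) C = κ s C := by
  simp [digitSum, Nat.digits_of_lt k s hs.ne' hsk, hs.ne']

lemma digitSum_digits_mul_pow (hk : 1 < k) {s : ℕ} (hs : 0 < s) (hsk : s < k) (E : ℕ) :
    digitSum κ (Nat.digits k (s * k ^ E)) 0 = κ s E := by
  have h := digitSum_digits_add_pow_mul κ hk hs (pow_pos (by omega) E) 0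
  rwa [zero_add, mul_comm, digitSum_digits_of_lt κ hs hsk, Nat.digits_zero, add_zero,
    show digitSum κ [] 0 = 0 by simp [digitSum], zero_add] at h

end DigitSum

lemma tmUnit_eq_stdAddChar {L : ℕ} [NeZero L] (k : ℕ) (κ : ℕ → ℕ → ZMod L) (n : ℕ) :
    tmUnit k L κ n = ZMod.stdAddChar (digitSum κ (Nat.digits k n) 0) := by
  rw [tmUnit, ← Int.cast_natCast, ← ZMod.stdAddChar_coe, Int.cast_natCast]
  congr 1
  push_cast
  refine sum_congr rfl fun y _ => ?_
  split_ifs <;> simp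

lemma exists_pow_add_mul_eq {M : Type*} [Monoid M] [Finite M] (x : M) :
    ∃ E₀ T : ℕ, 0 < T ∧ ∀ E, E₀ ≤ E → ∀ i, x ^ (E + T * i) = x ^ E := by
  obtain ⟨i, j, hij, hpow⟩ := Finite.exists_ne_map_eq_of_infinite (x ^ · : ℕ → M)
  wlog hlt : i < j generalizing i j
  · exact this j i hij.symm hpow.symm (by omega)
  refine ⟨i, j - i, by omega, fun E hE n => ?_⟩
  induction n with
  | zero => simp
  | succ n ih =>
    have hstep : x ^ (E + (j - i)) = x ^ E := by
      obtain ⟨d, rfl⟩ := Nat.exists_eq_add_of_le hE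
      rw [show i + d + (j - i) = j + d by omega, pow_add, ← hpow, ← pow_add]
    rw [mul_add, mul_one, ← add_assoc, pow_add, ih, ← pow_add, hstep]

def repunit (k T j : ℕ) : ℕ := ∑ i ∈ range j, k ^ (T * i)

section Repunit

variable {k T : ℕ}

lemma repunit_succ (j : ℕ) : repunit k T (j + 1) = repunit k T j + k ^ (T * j) * 1 := by
  rw [repunit, sum_range_succ, mul_one, repunit]

lemma repunit_pos {j : ℕ} (hj : 0 < j) : 0 < repunit k T j :=
  lt_of_lt_of_le (by simp) (single_le_sum (f := fun i => k ^ (T * i)) (fun _ _ => Nat.zero_le _)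
    (mem_range.mpr hj))

lemma repunit_lt (hk : 1 < k) (hT : 0 < T) (j : ℕ) : repunit k T j < k ^ (T * j) := by
  induction j with
  | zero => simp [repunit]
  | succ j ih =>
    have h2 : k ^ (T * j) * 2 ≤ k ^ (T * j) * k ^ T :=
      Nat.mul_le_mul_left _ (hk.trans_le (Nat.le_self_pow hT.ne' k))
    rw [repunit_succ, mul_add, mul_one, pow_add, mul_one]
    omega

lemma digitSum_digits_repunit (hk : 1 < k) (hT : 0 < T) {L : ℕ} (κ : ℕ → ℕ → ZMod L)
    (j X : ℕ) :
    digitSum κ (Nat.digits k (repunit k T j)) X = ∑ i ∈ range j, κ 1 (T * i + X) := by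
  induction j with
  | zero => simp [repunit, digitSum]
  | succ j ih =>
    rw [repunit_succ, digitSum_digits_add_pow_mul κ hk one_pos (repunit_lt hk hT j), ih,
      sum_range_succ, digitSum_digits_of_lt κ one_pos hk]

lemma pow_mul_repunit_modEq {D l : ℕ} (hpow : ∀ i, k ^ (D + T * i) ≡ k ^ D [MOD l]) (j : ℕ) :
    k ^ D * repunit k T j ≡ k ^ D * j [MOD l] := by
  induction j with
  | zero => simp [repunit, Nat.ModEq.refl]
  | succ j ih =>
    rw [repunit_succ, mul_one, mul_add, ← pow_add, mul_add, mul_one]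
    exact ih.add (hpow j)

end Repunit
section ShiftedDigitSum

variable {k L : ℕ} {κ : ℕ → ℕ → ZMod L} {N l : ℕ}

lemma digitSum_digits_eq_zero_of_dvd [NeZero L] (hk : 1 < k)
    (hper : ∀ t : ℕ, tmUnit k L κ (N + t * l) = tmUnit k L κ N) {n : ℕ} (hn : 0 < n)
    (hdvd : l ∣ n) : digitSum κ (Nat.digits k n) N = 0 := by
  obtain ⟨m, rfl⟩ := hdvd
  have h := hper (m * k ^ N)
  rw [tmUnit_eq_stdAddChar, tmUnit_eq_stdAddChar, ZMod.injective_stdAddChar.eq_iff,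
    show N + m * k ^ N * l = N + k ^ N * (l * m) by ring,
    digitSum_digits_add_pow_mul κ hk hn (Nat.lt_pow_self hk), add_zero] at h
  exact add_eq_left.mp h

lemma digitSum_shift_eq_of_modEq (hk : 1 < k) (hl : 0 < l)
    (hzero : ∀ n, 0 < n → l ∣ n → digitSum κ (Nat.digits k n) N = 0)
    {D D' a a' : ℕ} (hD : l < k ^ D) (hD' : l < k ^ D') (ha : 0 < a) (ha' : 0 < a')
    (hmod : k ^ D * a ≡ k ^ D' * a' [MOD l]) :
    digitSum κ (Nat.digits k a) (D + N) = digitSum κ (Nat.digits k a') (D' + N) := by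
  suffices key : ∀ D a, 0 < a → l < k ^ D →
      digitSum κ (Nat.digits k a) (D + N) = -digitSum κ (Nat.digits k (l - k ^ D * a % l)) N by
    rw [key D a ha hD, key D' a' ha' hD', hmod]
  intro D a ha hD
  have hlt : l - k ^ D * a % l < k ^ D := (Nat.sub_le _ _).trans_lt hD
  have hdvd : l ∣ l - k ^ D * a % l + k ^ D * a := by
    have := Nat.div_add_mod (k ^ D * a) l
    have := Nat.mod_lt (k ^ D * a) (by omega : 0 < l)
    exact ⟨1 + k ^ D * a / l, by rw [mul_add, mul_one]; omega⟩
  have h := hzero _ (by positivity) hdvd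
  rw [digitSum_digits_add_pow_mul κ hk ha hlt] at h
  exact eq_neg_of_add_eq_zero_right h

end ShiftedDigitSum
section Linearity

variable {k L : ℕ} {κ : ℕ → ℕ → ZMod L} {N l T D : ℕ}

lemma kappa_one_add_mul (hk : 1 < k) (hl : 0 < l)
    (hzero : ∀ n, 0 < n → l ∣ n → digitSum κ (Nat.digits k n) N = 0)
    (hpow : ∀ i, k ^ (D + T * i) ≡ k ^ D [MOD l]) (hD : l < k ^ D) (i : ℕ) :
    κ 1 (T * i + (D + N)) = κ 1 (D + N) := by
  have hD' : l < k ^ (D + T * i) := hD.trans_le (Nat.pow_le_pow_right (by omega) (by omega))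
  have h := digitSum_shift_eq_of_modEq hk hl hzero hD' hD one_pos one_pos
    (by simpa only [mul_one] using hpow i)
  rwa [digitSum_digits_of_lt κ one_pos hk, digitSum_digits_of_lt κ one_pos hk,
    add_comm D, add_assoc] at h

lemma digitSum_digits_repunit_shift (hk : 1 < k) (hl : 0 < l) (hT : 0 < T)
    (hzero : ∀ n, 0 < n → l ∣ n → digitSum κ (Nat.digits k n) N = 0)
    (hpow : ∀ i, k ^ (D + T * i) ≡ k ^ D [MOD l]) (hD : l < k ^ D) (j : ℕ) :
    digitSum κ (Nat.digits k (repunit k T j)) (D + N) = j * κ 1 (D + N) := by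
  rw [digitSum_digits_repunit hk hT,
    sum_congr rfl fun i _ => kappa_one_add_mul hk hl hzero hpow hD i, sum_const, card_range,
    nsmul_eq_mul]

lemma kappa_eq_mul_kappa_one (hk : 1 < k) (hl : 0 < l) (hT : 0 < T)
    (hzero : ∀ n, 0 < n → l ∣ n → digitSum κ (Nat.digits k n) N = 0)
    (hpow : ∀ i, k ^ (D + T * i) ≡ k ^ D [MOD l]) (hD : l < k ^ D) {s : ℕ} (hs : 0 < s)
    (hsk : s < k) :
    κ s (D + N) = s * κ 1 (D + N) := by
  rw [← digitSum_digits_of_lt κ hs hsk,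
    digitSum_shift_eq_of_modEq hk hl hzero hD hD hs (repunit_pos hs)
      (pow_mul_repunit_modEq hpow s).symm,
    digitSum_digits_repunit_shift hk hl hT hzero hpow hD]

lemma kappa_one_succ (hk : 1 < k) (hl : 0 < l) (hT : 0 < T)
    (hzero : ∀ n, 0 < n → l ∣ n → digitSum κ (Nat.digits k n) N = 0)
    (hpow : ∀ i, k ^ (D + T * i) ≡ k ^ D [MOD l]) (hD : l < k ^ D) :
    κ 1 (D + 1 + N) = k * κ 1 (D + N) := by
  have hD1 : l < k ^ (D + 1) := hD.trans_le (Nat.pow_le_pow_right (by omega) (by omega))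
  have hmod : k ^ (D + 1) * 1 ≡ k ^ D * repunit k T k [MOD l] := by
    rw [mul_one, pow_succ]
    exact (pow_mul_repunit_modEq hpow k).symm
  rw [← digitSum_digits_of_lt κ one_pos hk,
    digitSum_shift_eq_of_modEq hk hl hzero hD1 hD one_pos (repunit_pos (by omega)) hmod,
    digitSum_digits_repunit_shift hk hl hT hzero hpow hD]

lemma exists_kappa_eq_mul_pow (hk : 1 < k) (hl : 0 < l)
    (hzero : ∀ n, 0 < n → l ∣ n → digitSum κ (Nat.digits k n) N = 0) :
    ∃ A, ∀ s y, 0 < s → s < k → κ s (A + y) = κ 1 A * s * k ^ y := by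
  have : NeZero l := ⟨hl.ne'⟩
  obtain ⟨E₀, T, hT, hperiod⟩ := exists_pow_add_mul_eq (k : ZMod l)
  have hpow : ∀ y i, k ^ (E₀ + l + y + T * i) ≡ k ^ (E₀ + l + y) [MOD l] := fun y i =>
    (ZMod.natCast_eq_natCast_iff _ _ _).mp (by push_cast; exact hperiod _ (by omega) i)
  have hD : ∀ y, l < k ^ (E₀ + l + y) := fun y =>
    (Nat.lt_pow_self hk).trans_le (Nat.pow_le_pow_right (by omega) (by omega))
  have hone : ∀ y, κ 1 (E₀ + l + y + N) = κ 1 (E₀ + l + N) * k ^ y := by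
    intro y
    induction y with
    | zero => simp
    | succ y ih =>
      rw [← add_assoc, kappa_one_succ hk hl hT hzero (hpow y) (hD y), ih, pow_succ]
      ring
  refine ⟨E₀ + l + N, fun s y hs hsk => ?_⟩
  rw [show E₀ + l + N + y = E₀ + l + y + N by omega,
    kappa_eq_mul_kappa_one hk hl hT hzero (hpow y) (hD y) hs hsk, hone y]
  ring

end Linearity

/-- if some equally spaced subsequence of b is constant, then there are
A ∈ ℕ and an L-th root of unity h with b(s·k^{A+y}) = h^{s·kʸ} for all digits s and
y ∈ ℕ; equivalently κ(s,A+y) ≡ κ(1,A)·s·kʸ (mod L). -/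
theorem stmt_9 (k L : ℕ) (hk : 1 < k) (hL : 1 < L) (κ : ℕ → ℕ → ZMod L)
    (N l : ℕ) (hl : 0 < l)
    (hper : ∀ t : ℕ, tmUnit k L κ (N + t * l) = tmUnit k L κ N) :
    ∃ A : ℕ, ∃ h : ℂ, h ^ L = 1 ∧
      (∀ s y : ℕ, 1 ≤ s → s ≤ k - 1 →
        tmUnit k L κ (s * k ^ (A + y)) = h ^ (s * k ^ y)) ∧
      (∀ s y : ℕ, 1 ≤ s → s ≤ k - 1 →
        κ s (A + y) = κ 1 A * (s : ZMod L) * (k : ZMod L) ^ y) := by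
  have : NeZero L := ⟨by omega⟩
  obtain ⟨A, hA⟩ := exists_kappa_eq_mul_pow hk hl
    fun n hn hdvd => digitSum_digits_eq_zero_of_dvd hk hper hn hdvd
  have hκ : ∀ s y : ℕ, 1 ≤ s → s ≤ k - 1 → κ s (A + y) = κ 1 A * s * k ^ y :=
    fun s y hs hsk => hA s y hs (by omega)
  refine ⟨A, ZMod.stdAddChar (κ 1 A), ?_, fun s y hs hsk => ?_, hκ⟩
  · rw [← AddChar.map_nsmul_eq_pow, nsmul_eq_mul, ZMod.natCast_self, zero_mul,
      AddChar.map_zero_eq_one]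
  · rw [tmUnit_eq_stdAddChar, digitSum_digits_mul_pow κ hk hs (by omega), hκ s y hs hsk,
      ← AddChar.map_nsmul_eq_pow, nsmul_eq_mul]
    congr 1
    push_cast
    ring
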